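/- Let n ≥ 1 and let d : (Fin 4)^n → ℝ with d(0,0,…,0) = 1. Let Φ_D be the unique linear map on 2^n × 2^n complex matrices satisfying Φ_D(Σ_v) = d(v) • Σ_v for every v ∈ (Fin 4)^n. For w ∈ (Fin 4)^n set β_w = 4^{−n} ∑_{v ∈ (Fin 4)^n} (∏_{k=1}^n c(w_k, v_k)) d(v). Then Φ_D is completely positive if and only if β_w ≥ 0 for every w ∈ (Fin 4)^n. (These are the Algoet–Fujiwara conditions for n qubits.) -/

import Mathlib

open scoped ComplexOrder Matrix

/-- The Pauli matrices `σ_0, σ_1, σ_2, σ_3`. -/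
def pauli : Fin 4 → Matrix (Fin 2) (Fin 2) ℂ :=
  ![!![1, 0; 0, 1], !![0, 1; 1, 0], !![0, -Complex.I; Complex.I, 0], !![1, 0; 0, -1]]

/-- The `n`-fold Kronecker product `σ_{v 1} ⊗ ⋯ ⊗ σ_{v n}`, realized as a matrix indexed by
`Fin n → Fin 2` (which is canonically identified with `Fin (2 ^ n)`). -/
def pauliTensor {n : ℕ} (v : Fin n → Fin 4) : Matrix (Fin n → Fin 2) (Fin n → Fin 2) ℂ :=
  Matrix.of fun x y => ∏ k, pauli (v k) (x k) (y k)

/-- `c i j = 1` if `i = 0`, `j = 0` or `i = j`, and `c i j = -1` otherwise. -/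
def pauliSign (i j : Fin 4) : ℝ :=
  if i = 0 ∨ j = 0 ∨ i = j then 1 else -1

/-- `Φ` is completely positive: for every `m ≥ 1`, the map `id_m ⊗ Φ` (acting blockwise on
`m × m` block matrices with `ι × ι` blocks) maps positive semidefinite matrices to positive
semidefinite matrices. -/
def CompletelyPositive {ι : Type} [Fintype ι] [DecidableEq ι]
    (Φ : Matrix ι ι ℂ → Matrix ι ι ℂ) : Prop :=
  ∀ m : ℕ, 1 ≤ m → ∀ M : Matrix (Fin m × ι) (Fin m × ι) ℂ, M.PosSemidef →
    (Matrix.of fun p q : Fin m × ι =>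
      Φ (Matrix.of fun a b : ι => M (p.1, a) (q.1, b)) p.2 q.2).PosSemidef

/-!
Since `σ_w σ_v σ_w = c(w, v) σ_v`, and likewise for the tensors `Σ_w` with the product sign
`∏ₖ c(w_k, v_k)`, the map `X ↦ ∑_w β_w Σ_w X Σ_w` sends `Σ_v` to `(∑_w β_w ∏ₖ c(w_k, v_k)) Σ_v`,
which is `d(v) Σ_v` because the sign vectors `w ↦ ∏ₖ c(w_k, v_k)` are orthogonal. The `4ⁿ` matrices
`Σ_v` are trace-orthogonal, hence a basis, so this is a Kraus decomposition of `Φ_D`: nonnegative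
weights make it completely positive. Conversely, in the Choi matrix `∑_w β_w |Σ_w⟩⟩⟨⟨Σ_w|` the
vectorizations `|Σ_w⟩⟩` are orthogonal, so its quadratic form at `|Σ_w⟩⟩` is `4ⁿ β_w`.
-/

open Matrix
open scoped Kronecker

namespace Matrix

section KroneckerPi

variable {κ α β γ R : Type*} [Fintype κ]

def kroneckerPi [CommMonoid R] (A : κ → Matrix α β R) : Matrix (κ → α) (κ → β) R :=
  of fun x y => ∏ k, A k (x k) (y k)

theorem kroneckerPi_mul [CommSemiring R] [DecidableEq κ] [Fintype β]
    (A : κ → Matrix α β R) (B : κ → Matrix β γ R) :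
    kroneckerPi A * kroneckerPi B = kroneckerPi fun k => A k * B k := by
  ext x z
  simp only [kroneckerPi, mul_apply, of_apply, ← Finset.prod_mul_distrib]
  rw [Fintype.prod_sum]

theorem kroneckerPi_smul [CommSemiring R] (c : κ → R) (A : κ → Matrix α β R) :
    kroneckerPi (fun k => c k • A k) = (∏ k, c k) • kroneckerPi A := by
  ext x y
  simp [kroneckerPi, Finset.prod_mul_distrib]

theorem conjTranspose_kroneckerPi [CommMonoid R] [StarMul R] (A : κ → Matrix α β R) :
    (kroneckerPi A)ᴴ = kroneckerPi fun k => (A k)ᴴ := by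
  ext x y
  simp [kroneckerPi, star_prod]

theorem trace_kroneckerPi [CommSemiring R] [DecidableEq κ] [Fintype α] (A : κ → Matrix α α R) :
    trace (kroneckerPi A) = ∏ k, trace (A k) := by
  simp only [trace, diag, kroneckerPi, of_apply]
  rw [Fintype.prod_sum]

end KroneckerPi

theorem one_kronecker_mul_mul_one_kronecker_apply {ι μ R : Type*} [Fintype ι] [Fintype μ]
    [DecidableEq μ] [CommSemiring R] (K L : Matrix ι ι R) (M : Matrix (μ × ι) (μ × ι) R)
    (p q : μ × ι) :
    (((1 : Matrix μ μ R) ⊗ₖ K) * M * ((1 : Matrix μ μ R) ⊗ₖ L)) p q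
      = (K * (of fun a b => M (p.1, a) (q.1, b)) * L) p.2 q.2 := by
  simp [mul_apply, Fintype.sum_prod_type, one_apply, ite_mul, Finset.sum_mul]

end Matrix

def maximallyEntangled {ι μ R : Type*} [DecidableEq μ] [Zero R] [One R] (e : ι ≃ μ) :
    μ × ι → R :=
  fun p => if p.1 = e p.2 then 1 else 0

theorem star_dotProduct_one_kronecker_mulVec_maximallyEntangled {ι μ R : Type*} [Fintype ι]
    [DecidableEq ι] [Fintype μ] [DecidableEq μ] [CommSemiring R] [StarRing R] (e : ι ≃ μ)
    (A : Matrix ι ι R) :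
    star (maximallyEntangled e) ⬝ᵥ ((1 : Matrix μ μ R) ⊗ₖ A) *ᵥ maximallyEntangled e
      = trace A := by
  simp only [maximallyEntangled, dotProduct, mulVec, Fintype.sum_prod_type_right, Pi.star_apply,
    kroneckerMap_apply, one_apply, apply_ite star, star_one, star_zero, ite_mul, one_mul, zero_mul,
    mul_ite, mul_one, mul_zero]
  simp [Finset.sum_ite_eq', trace]

section Kraus

variable {ι κ : Type} [Fintype ι] [Fintype κ]

/-- `id_m ⊗ Φ`, so that `CompletelyPositive Φ` says that every `ampliation m Φ` preserves
positivity. -/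
def ampliation (m : ℕ) (Φ : Matrix ι ι ℂ → Matrix ι ι ℂ) (M : Matrix (Fin m × ι) (Fin m × ι) ℂ) :
    Matrix (Fin m × ι) (Fin m × ι) ℂ :=
  of fun p q => Φ (of fun a b => M (p.1, a) (q.1, b)) p.2 q.2

theorem ampliation_of_kraus {m : ℕ} {Φ : Matrix ι ι ℂ → Matrix ι ι ℂ} (K : κ → Matrix ι ι ℂ)
    (c : κ → ℂ) (hΦ : ∀ X, Φ X = ∑ u, c u • (K u * X * (K u)ᴴ))
    (M : Matrix (Fin m × ι) (Fin m × ι) ℂ) :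
    ampliation m Φ M = ∑ u, c u • (((1 : Matrix (Fin m) (Fin m) ℂ) ⊗ₖ K u) * M * (1 ⊗ₖ K u)ᴴ) := by
  ext p q
  simp only [ampliation, hΦ, of_apply, Matrix.sum_apply, Matrix.smul_apply,
    conjTranspose_kronecker, conjTranspose_one, one_kronecker_mul_mul_one_kronecker_apply]

variable [DecidableEq ι]

theorem completelyPositive_of_kraus {Φ : Matrix ι ι ℂ → Matrix ι ι ℂ} (K : κ → Matrix ι ι ℂ)
    (β : κ → ℝ) (hβ : ∀ u, 0 ≤ β u) (hΦ : ∀ X, Φ X = ∑ u, (β u : ℂ) • (K u * X * (K u)ᴴ)) :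
    CompletelyPositive Φ := by
  intro m _ M hM
  show (ampliation m Φ M).PosSemidef
  rw [ampliation_of_kraus K _ hΦ]
  exact posSemidef_sum _ fun u _ =>
    (hM.mul_mul_conjTranspose_same _).smul (Complex.zero_le_real.mpr (hβ u))

variable [DecidableEq κ]

theorem nonneg_of_completelyPositive_of_kraus [Nonempty ι] {Φ : Matrix ι ι ℂ → Matrix ι ι ℂ}
    (K : κ → Matrix ι ι ℂ) (β : κ → ℝ) (c : ℝ) (hc : c ≠ 0)
    (hK : ∀ u v, trace ((K u)ᴴ * K v) = if u = v then (c : ℂ) else 0)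
    (hΦ : ∀ X, Φ X = ∑ u, (β u : ℂ) • (K u * X * (K u)ᴴ)) (hCP : CompletelyPositive Φ) (w : κ) :
    0 ≤ β w := by
  let Ω : Fin (Fintype.card ι) × ι → ℂ := maximallyEntangled (Fintype.equivFin ι)
  let y : κ → Fin (Fintype.card ι) × ι → ℂ := fun u =>
    ((1 : Matrix (Fin (Fintype.card ι)) (Fin (Fintype.card ι)) ℂ) ⊗ₖ K u) *ᵥ Ω
  have hy : ∀ u v, star (y u) ⬝ᵥ y v = if u = v then (c : ℂ) else 0 := by
    intro u v
    simp only [y, Ω, star_mulVec, ← dotProduct_mulVec, mulVec_mulVec, conjTranspose_kronecker,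
      conjTranspose_one, ← mul_kronecker_mul, one_mul,
      star_dotProduct_one_kronecker_mulVec_maximallyEntangled, hK]
  have hChoi : ampliation _ Φ (vecMulVec Ω (star Ω))
      = ∑ u, (β u : ℂ) • vecMulVec (y u) (star (y u)) := by
    rw [ampliation_of_kraus K _ hΦ]
    simp only [mul_vecMulVec, vecMulVec_mul, y, star_mulVec]
  have hform : star (y w) ⬝ᵥ ampliation _ Φ (vecMulVec Ω (star Ω)) *ᵥ y w
      = ((β w * (c * c) : ℝ) : ℂ) := by
    simp only [hChoi, sum_mulVec, dotProduct_sum, smul_mulVec, vecMulVec_mulVec, dotProduct_smul,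
      hy, smul_eq_mul]
    simp
  have hpos : 0 ≤ star (y w) ⬝ᵥ ampliation _ Φ (vecMulVec Ω (star Ω)) *ᵥ y w :=
    (hCP _ Fintype.card_pos _ (posSemidef_vecMulVec_self_star Ω)).dotProduct_mulVec_nonneg (y w)
  rw [hform] at hpos
  exact nonneg_of_mul_nonneg_left (Complex.zero_le_real.mp hpos) (mul_self_pos.mpr hc)

theorem completelyPositive_iff_of_kraus_orthogonal [Nonempty ι]
    {Φ : Matrix ι ι ℂ → Matrix ι ι ℂ} (K : κ → Matrix ι ι ℂ) (β : κ → ℝ) (c : ℝ) (hc : c ≠ 0)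
    (hK : ∀ u v, trace ((K u)ᴴ * K v) = if u = v then (c : ℂ) else 0)
    (hΦ : ∀ X, Φ X = ∑ u, (β u : ℂ) • (K u * X * (K u)ᴴ)) :
    CompletelyPositive Φ ↔ ∀ u, 0 ≤ β u :=
  ⟨nonneg_of_completelyPositive_of_kraus K β c hc hK hΦ,
    fun hβ => completelyPositive_of_kraus K β hβ hΦ⟩

end Kraus

section Pauli

theorem pauli_conjTranspose (i : Fin 4) : (pauli i)ᴴ = pauli i := by
  ext a b
  fin_cases i <;> fin_cases a <;> fin_cases b <;> simp [pauli]

theorem pauli_mul_pauli_mul_pauli (i j : Fin 4) :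
    pauli i * pauli j * pauli i = (pauliSign i j : ℂ) • pauli j := by
  ext a b
  fin_cases i <;> fin_cases j <;> fin_cases a <;> fin_cases b <;>
    simp [pauli, pauliSign, mul_apply, Fin.sum_univ_two]

theorem trace_pauli_mul_pauli (i j : Fin 4) :
    trace (pauli i * pauli j) = if i = j then 2 else 0 := by
  fin_cases i <;> fin_cases j <;> simp [pauli, trace, Fin.sum_univ_two] <;> norm_num

theorem sum_pauliSign_mul_pauliSign (u v : Fin 4) :
    ∑ i, pauliSign i u * pauliSign i v = if u = v then 4 else 0 := by
  fin_cases u <;> fin_cases v <;> simp [pauliSign, Fin.sum_univ_four] <;> norm_num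

variable {n : ℕ}

theorem pauliTensor_eq_kroneckerPi (v : Fin n → Fin 4) :
    pauliTensor v = kroneckerPi fun k => pauli (v k) := rfl

theorem pauliTensor_conjTranspose (v : Fin n → Fin 4) : (pauliTensor v)ᴴ = pauliTensor v := by
  simp only [pauliTensor_eq_kroneckerPi, conjTranspose_kroneckerPi, pauli_conjTranspose]

theorem pauliTensor_mul_pauliTensor_mul_pauliTensor (w v : Fin n → Fin 4) :
    pauliTensor w * pauliTensor v * pauliTensor w
      = ((∏ k, pauliSign (w k) (v k) : ℝ) : ℂ) • pauliTensor v := by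
  simp only [pauliTensor_eq_kroneckerPi, kroneckerPi_mul, pauli_mul_pauli_mul_pauli,
    kroneckerPi_smul, Complex.ofReal_prod]

theorem trace_pauliTensor_mul_pauliTensor (u v : Fin n → Fin 4) :
    trace (pauliTensor u * pauliTensor v) = if u = v then 2 ^ n else 0 := by
  simp only [pauliTensor_eq_kroneckerPi, kroneckerPi_mul, trace_kroneckerPi,
    trace_pauli_mul_pauli, Fintype.prod_ite_zero, funext_iff, Finset.prod_const, Finset.card_univ,
    Fintype.card_fin]

theorem linearIndependent_pauliTensor : LinearIndependent ℂ (pauliTensor (n := n)) := by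
  refine Fintype.linearIndependent_iff.mpr fun g hg u => ?_
  have h := congrArg (fun X => trace (pauliTensor u * X)) hg
  simpa [Matrix.mul_sum, trace_sum, trace_pauliTensor_mul_pauliTensor] using h

theorem span_pauliTensor : Submodule.span ℂ (Set.range (pauliTensor (n := n))) = ⊤ :=
  linearIndependent_pauliTensor.span_eq_top_of_card_eq_finrank' <| by
    simp [Module.finrank_matrix, ← mul_pow]

theorem sum_prod_pauliSign_mul_prod_pauliSign (u v : Fin n → Fin 4) :
    ∑ w : Fin n → Fin 4, (∏ k, pauliSign (w k) (u k)) * ∏ k, pauliSign (w k) (v k)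
      = if u = v then 4 ^ n else 0 := by
  simp only [← Finset.prod_mul_distrib]
  rw [← Fintype.prod_sum fun k i => pauliSign i (u k) * pauliSign i (v k)]
  simp only [sum_pauliSign_mul_pauliSign, Fintype.prod_ite_zero, funext_iff, Finset.prod_const,
    Finset.card_univ, Fintype.card_fin]

noncomputable def pauliWeight (d : (Fin n → Fin 4) → ℝ) (w : Fin n → Fin 4) : ℝ :=
  (∑ v : Fin n → Fin 4, (∏ k, pauliSign (w k) (v k)) * d v) / 4 ^ n

theorem sum_pauliWeight_mul_prod_pauliSign (d : (Fin n → Fin 4) → ℝ) (v : Fin n → Fin 4) :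
    ∑ w, pauliWeight d w * ∏ k, pauliSign (w k) (v k) = d v := by
  calc ∑ w, pauliWeight d w * ∏ k, pauliSign (w k) (v k)
      = (∑ u, d u * ∑ w : Fin n → Fin 4,
          (∏ k, pauliSign (w k) (u k)) * ∏ k, pauliSign (w k) (v k)) / 4 ^ n := by
        simp only [pauliWeight, div_mul_eq_mul_div, ← Finset.sum_div, Finset.sum_mul,
          Finset.mul_sum]
        rw [Finset.sum_comm]
        congr! 3 with u _ w
        ring
    _ = d v := by
        simp [sum_prod_pauliSign_mul_prod_pauliSign]

theorem apply_eq_sum_pauliWeight_smul (d : (Fin n → Fin 4) → ℝ)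
    (Φ : Matrix (Fin n → Fin 2) (Fin n → Fin 2) ℂ →ₗ[ℂ] Matrix (Fin n → Fin 2) (Fin n → Fin 2) ℂ)
    (hΦ : ∀ v, Φ (pauliTensor v) = d v • pauliTensor v)
    (X : Matrix (Fin n → Fin 2) (Fin n → Fin 2) ℂ) :
    Φ X = ∑ w, (pauliWeight d w : ℂ) • (pauliTensor w * X * (pauliTensor w)ᴴ) := by
  let Ψ := ∑ w, (pauliWeight d w : ℂ) •
    LinearMap.mulLeftRight ℂ (pauliTensor w, (pauliTensor w)ᴴ)
  suffices Φ = Ψ by simp [this, Ψ]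
  refine LinearMap.ext_on_range span_pauliTensor fun v => ?_
  simp only [Ψ, hΦ, LinearMap.sum_apply, LinearMap.smul_apply,
    LinearMap.mulLeftRight_apply, pauliTensor_conjTranspose,
    pauliTensor_mul_pauliTensor_mul_pauliTensor, smul_smul, ← Finset.sum_smul,
    ← Complex.ofReal_mul]
  rw [← Complex.ofReal_sum, sum_pauliWeight_mul_prod_pauliSign, Complex.coe_smul]

end Pauli

theorem stmt_7_general (n : ℕ)
    (d : (Fin n → Fin 4) → ℝ)
    (Φ : Matrix (Fin n → Fin 2) (Fin n → Fin 2) ℂ →ₗ[ℂ]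
         Matrix (Fin n → Fin 2) (Fin n → Fin 2) ℂ)
    (hΦ : ∀ v : Fin n → Fin 4, Φ (pauliTensor v) = d v • pauliTensor v) :
    CompletelyPositive Φ ↔
      ∀ w : Fin n → Fin 4,
        0 ≤ (∑ v : Fin n → Fin 4, (∏ k, pauliSign (w k) (v k)) * d v) / 4 ^ n :=
  completelyPositive_iff_of_kraus_orthogonal pauliTensor (pauliWeight d) (2 ^ n) (by positivity)
    (fun u v => by simp [pauliTensor_conjTranspose, trace_pauliTensor_mul_pauliTensor])
    (apply_eq_sum_pauliWeight_smul d Φ hΦ)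

theorem stmt_7 (n : ℕ) (hn : 1 ≤ n)
    (d : (Fin n → Fin 4) → ℝ) (hd : d (fun _ => 0) = 1)
    (Φ : Matrix (Fin n → Fin 2) (Fin n → Fin 2) ℂ →ₗ[ℂ]
         Matrix (Fin n → Fin 2) (Fin n → Fin 2) ℂ)
    (hΦ : ∀ v : Fin n → Fin 4, Φ (pauliTensor v) = d v • pauliTensor v) :
    CompletelyPositive Φ ↔
      ∀ w : Fin n → Fin 4,
        0 ≤ (∑ v : Fin n → Fin 4, (∏ k, pauliSign (w k) (v k)) * d v) / 4 ^ n :=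
  stmt_7_general n d Φ hΦ
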